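/- arXiv:2504.06566 — 4 statements merged into one kernel-verified Lean document; each statement's English description precedes it below -/
import Mathlib

section
/- Under the factor model, for every t ≥ 0 and every r ∈ ℝ^d the score of the time-t marginal decomposes into a subspace component and a complement component: ∇ log p_t(r) = Λ_t⁻¹ β Γ_t · ∇ log p_t^fac(Γ_t βᵀ Λ_t⁻¹ r) − Λ_t^{-1/2}(I_d − T_t) Λ_t^{-1/2} r. (Here Λ_t⁻¹ β Γ_t = Λ_t^{-1/2} T_t Λ_t^{1/2} β and Γ_t βᵀ Λ_t⁻¹ = βᵀ Λ_t^{1/2} T_t Λ_t^{-1/2}, so the first summand, the subspace score, lies in the column space of Λ_t^{-1/2} β, while the second, the complement score, is linear in r and orthogonal to that space after rescaling by Λ_t^{1/2}.) -/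
open MeasureTheory Matrix

noncomputable section

/-- Euclidean (ℓ²) norm on `Fin n → ℝ`. -/
def eucNorm {n : ℕ} (x : Fin n → ℝ) : ℝ := Real.sqrt (∑ i, x i ^ 2)

/-- The `n`-dimensional Gaussian density `φ(x; μ, S)`. -/
def gaussD (n : ℕ) (x μ : Fin n → ℝ) (S : Matrix (Fin n) (Fin n) ℝ) : ℝ :=
  (2 * Real.pi) ^ (-(n : ℝ) / 2) * S.det ^ (-(1 : ℝ) / 2) *
    Real.exp (-((x - μ) ⬝ᵥ (S⁻¹ *ᵥ (x - μ))) / 2)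

/-- Gradient as the vector of partial derivatives. -/
def gradv {n : ℕ} (f : (Fin n → ℝ) → ℝ) (x : Fin n → ℝ) : Fin n → ℝ :=
  fun i => fderiv ℝ f x (Pi.single i 1)

/-- `α_t = e^{-t/2}`. -/
def af (t : ℝ) : ℝ := Real.exp (-t / 2)

/-- `h_t = 1 - α_t²`. -/
def hf (t : ℝ) : ℝ := 1 - af t ^ 2

/-- `Λ_t = diag(h_t + σ_i² α_t²)`. -/
def Lam {d : ℕ} (σ : Fin d → ℝ) (t : ℝ) : Matrix (Fin d) (Fin d) ℝ :=
  Matrix.diagonal fun i => hf t + σ i ^ 2 * af t ^ 2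

/-- `Λ_t^{-1/2}`. -/
def LamInvSqrt {d : ℕ} (σ : Fin d → ℝ) (t : ℝ) : Matrix (Fin d) (Fin d) ℝ :=
  Matrix.diagonal fun i => (Real.sqrt (hf t + σ i ^ 2 * af t ^ 2))⁻¹

/-- `Γ_t = (βᵀ Λ_t⁻¹ β)⁻¹`. -/
def Gam {d k : ℕ} (β : Matrix (Fin d) (Fin k) ℝ) (σ : Fin d → ℝ) (t : ℝ) :
    Matrix (Fin k) (Fin k) ℝ :=
  (βᵀ * (Lam σ t)⁻¹ * β)⁻¹

/-- `T_t = Λ_t^{-1/2} β Γ_t βᵀ Λ_t^{-1/2}`. -/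
def Tproj {d k : ℕ} (β : Matrix (Fin d) (Fin k) ℝ) (σ : Fin d → ℝ) (t : ℝ) :
    Matrix (Fin d) (Fin d) ℝ :=
  LamInvSqrt σ t * β * Gam β σ t * βᵀ * LamInvSqrt σ t

/-- Time-`t` marginal density `p_t`. -/
def pT {d k : ℕ} (β : Matrix (Fin d) (Fin k) ℝ) (σ : Fin d → ℝ)
    (pfac : (Fin k → ℝ) → ℝ) (t : ℝ) (r : Fin d → ℝ) : ℝ :=
  ∫ f : Fin k → ℝ, gaussD d r (af t • (β *ᵥ f)) (Lam σ t) * pfac f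

/-- Smoothed factor density `p_t^fac`. -/
def pTfac {d k : ℕ} (β : Matrix (Fin d) (Fin k) ℝ) (σ : Fin d → ℝ)
    (pfac : (Fin k → ℝ) → ℝ) (t : ℝ) (y : Fin k → ℝ) : ℝ :=
  ∫ f : Fin k → ℝ, gaussD k y (af t • f) (Gam β σ t) * pfac f

/-!
Completing the square in the exponent factorizes the Gaussian kernel of `p_t`: with
`A = Γ_t βᵀ Λ_t⁻¹` and `M = Λ_t⁻¹ - Λ_t⁻¹ β Γ_t βᵀ Λ_t⁻¹ = Λ_t^{-1/2} (I - T_t) Λ_t^{-1/2}`,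
`φ(r; α_t β f, Λ_t) = c · exp (-rᵀ M r / 2) · φ(A r; α_t f, Γ_t)` for a constant `c > 0`, hence
`p_t(r) = c · exp (-rᵀ M r / 2) · p_t^fac(A r)`. Taking logarithms and differentiating gives
`∇ log p_t(r) = Aᵀ ∇ log p_t^fac(A r) - M r`. The analytic input is that `p_t^fac` is positive and
differentiable; the latter is differentiation under the integral sign, dominated because, writing
`Γ_t⁻¹ = Lᵀ L`, the kernel `exp (-‖L z‖² / 2)` has gradient bounded by `‖L‖` as `x e^{-x²/2} ≤ 1`.
-/

open Real

section GaussianSmoothing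

variable {E F α : Type*} [NormedAddCommGroup E] [NormedSpace ℝ E]
  [NormedAddCommGroup F] [InnerProductSpace ℝ F] [MeasurableSpace α] {μ : Measure α}

lemma mul_exp_neg_sq_div_two_le_one (x : ℝ) : x * exp (-x ^ 2 / 2) ≤ 1 := by
  have h : x ≤ exp (x ^ 2 / 2) := by nlinarith [add_one_le_exp (x ^ 2 / 2), sq_nonneg (x - 1)]
  calc x * exp (-x ^ 2 / 2) ≤ exp (x ^ 2 / 2) * exp (-x ^ 2 / 2) := by gcongr
    _ = 1 := by rw [← exp_add]; simp [neg_div]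

lemma hasFDerivAt_exp_neg_norm_sq (T : E →L[ℝ] F) (z : E) :
    HasFDerivAt (fun z => exp (-‖T z‖ ^ 2 / 2))
      (-(exp (-‖T z‖ ^ 2 / 2) • (innerSL ℝ (T z)).comp T)) z := by
  have h := (T.hasFDerivAt (x := z)).norm_sq.neg.mul_const (1 / 2)
  convert h.exp using 1
  · ext z; rw [div_eq_mul_one_div, Pi.neg_apply]
  · ext v; simp [two_smul, div_eq_mul_inv]; ring

lemma norm_exp_neg_norm_sq_smul_le (T : E →L[ℝ] F) (z : E) :
    ‖exp (-‖T z‖ ^ 2 / 2) • (innerSL ℝ (T z)).comp T‖ ≤ ‖T‖ := by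
  calc ‖exp (-‖T z‖ ^ 2 / 2) • (innerSL ℝ (T z)).comp T‖
      ≤ exp (-‖T z‖ ^ 2 / 2) * (‖T z‖ * ‖T‖) := by
        rw [norm_smul, norm_of_nonneg (exp_pos _).le, ← innerSL_apply_norm ℝ (T z)]
        gcongr
        exact ContinuousLinearMap.opNorm_comp_le _ _
    _ = (‖T z‖ * exp (-‖T z‖ ^ 2 / 2)) * ‖T‖ := by ring
    _ ≤ 1 * ‖T‖ := by gcongr; exact mul_exp_neg_sq_div_two_le_one _
    _ = ‖T‖ := one_mul _

lemma integrable_exp_neg_norm_sq_mul (T : E →L[ℝ] F) {m : α → E}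
    (hm : AEStronglyMeasurable m μ) {g : α → ℝ} (hg : Integrable g μ) (y : E) :
    Integrable (fun a => exp (-‖T (y - m a)‖ ^ 2 / 2) * g a) μ := by
  refine hg.bdd_mul (c := 1) (by fun_prop) (Filter.Eventually.of_forall fun a => ?_)
  rw [norm_of_nonneg (exp_pos _).le, exp_le_one_iff]
  have := sq_nonneg ‖T (y - m a)‖
  linarith

theorem differentiable_integral_exp_neg_norm_sq_mul (T : E →L[ℝ] F) {m : α → E}
    (hm : AEStronglyMeasurable m μ) {g : α → ℝ} (hg : Integrable g μ) :
    Differentiable ℝ (fun y => ∫ a, exp (-‖T (y - m a)‖ ^ 2 / 2) * g a ∂μ) := by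
  intro y₀
  have hD_cont : Continuous fun z => exp (-‖T z‖ ^ 2 / 2) • (innerSL ℝ (T z)).comp T := by
    fun_prop
  refine (hasFDerivAt_integral_of_dominated_of_fderiv_le
    (F' := fun y a => g a • -(exp (-‖T (y - m a)‖ ^ 2 / 2) • (innerSL ℝ (T (y - m a))).comp T))
    (bound := fun a => ‖T‖ * ‖g a‖) Filter.univ_mem
    (Filter.Eventually.of_forall fun y => (integrable_exp_neg_norm_sq_mul T hm hg y).1)
    (integrable_exp_neg_norm_sq_mul T hm hg y₀) ?_ ?_ (hg.norm.const_mul _) ?_).differentiableAt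
  · exact hg.1.smul (hD_cont.comp_aestronglyMeasurable (aestronglyMeasurable_const.sub hm)).neg
  · refine Filter.Eventually.of_forall fun a y _ => ?_
    rw [norm_smul, norm_neg, mul_comm]
    exact mul_le_mul_of_nonneg_right (norm_exp_neg_norm_sq_smul_le T _) (norm_nonneg _)
  · refine Filter.Eventually.of_forall fun a y _ => ?_
    exact (((hasFDerivAt_exp_neg_norm_sq T (y - m a)).comp y
      ((hasFDerivAt_id y).sub_const (m a))).mul_const (g a)).congr_fderiv (by simp)

end GaussianSmoothing

section CompleteSquare

variable {m n : Type*} [Fintype m] [Fintype n] [DecidableEq n]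

lemma dotProduct_mulVec_eq_mulVec_dotProduct {P : Matrix m m ℝ} (hP : Pᵀ = P) (v w : m → ℝ) :
    v ⬝ᵥ P *ᵥ w = (P *ᵥ v) ⬝ᵥ w := by
  rw [dotProduct_mulVec, ← mulVec_transpose, hP]

theorem dotProduct_mulVec_complete_square {P : Matrix m m ℝ} (hP : Pᵀ = P) {B : Matrix m n ℝ}
    (hG : IsUnit (Bᵀ * P * B).det) (r : m → ℝ) (μ : n → ℝ) :
    (r - B *ᵥ μ) ⬝ᵥ P *ᵥ (r - B *ᵥ μ) =
      (((Bᵀ * P * B)⁻¹ * Bᵀ * P) *ᵥ r - μ) ⬝ᵥ (Bᵀ * P * B) *ᵥ (((Bᵀ * P * B)⁻¹ * Bᵀ * P) *ᵥ r - μ)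
        + r ⬝ᵥ (P - P * B * (Bᵀ * P * B)⁻¹ * Bᵀ * P) *ᵥ r := by
  set G := Bᵀ * P * B
  set u := (G⁻¹ * Bᵀ * P) *ᵥ r
  set w := r - B *ᵥ u
  -- `w` is the `P`-orthogonal residual of `r` after projecting onto the range of `B`.
  have hw : Bᵀ *ᵥ (P *ᵥ w) = 0 := by
    have : Bᵀ * P * (B * (G⁻¹ * Bᵀ * P)) = Bᵀ * P := by
      rw [← Matrix.mul_assoc, ← Matrix.mul_assoc, ← Matrix.mul_assoc, mul_nonsing_inv _ hG,
        Matrix.one_mul]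
    simp only [w, u, mulVec_sub, mulVec_mulVec, ← Matrix.mul_assoc] at this ⊢
    rw [this, sub_self]
  have hcross : ∀ v : n → ℝ, (B *ᵥ v) ⬝ᵥ P *ᵥ w = 0 := fun v => by
    rw [dotProduct_comm, dotProduct_mulVec, ← mulVec_transpose, hw, zero_dotProduct]
  have hsplit : r - B *ᵥ μ = w + B *ᵥ (u - μ) := by
    simp only [w, mulVec_sub]; abel
  have hres : w ⬝ᵥ P *ᵥ w = r ⬝ᵥ (P - P * B * G⁻¹ * Bᵀ * P) *ᵥ r := by
    have hPBu : P *ᵥ (B *ᵥ u) = (P * B * G⁻¹ * Bᵀ * P) *ᵥ r := by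
      simp only [u, mulVec_mulVec, Matrix.mul_assoc]
    calc w ⬝ᵥ P *ᵥ w = r ⬝ᵥ P *ᵥ w - (B *ᵥ u) ⬝ᵥ P *ᵥ w := sub_dotProduct _ _ _
      _ = r ⬝ᵥ P *ᵥ w := by rw [hcross, sub_zero]
      _ = r ⬝ᵥ (P - P * B * G⁻¹ * Bᵀ * P) *ᵥ r := by
        rw [mulVec_sub, hPBu, ← sub_mulVec]
  have hside : w ⬝ᵥ P *ᵥ (B *ᵥ (u - μ)) = 0 := by
    rw [dotProduct_mulVec_eq_mulVec_dotProduct hP, dotProduct_comm, hcross]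
  have hG_form : (B *ᵥ (u - μ)) ⬝ᵥ P *ᵥ (B *ᵥ (u - μ)) = (u - μ) ⬝ᵥ G *ᵥ (u - μ) := by
    rw [dotProduct_comm, ← dotProduct_transpose_mulVec, mulVec_mulVec, mulVec_mulVec]
  rw [hsplit, mulVec_add, dotProduct_add, add_dotProduct, add_dotProduct, hcross, hside,
    hG_form, hres]
  ring

end CompleteSquare

open scoped MatrixOrder in
lemma Matrix.PosSemidef.exists_eq_transpose_mul_self {n : Type*} [Fintype n] [DecidableEq n]
    {A : Matrix n n ℝ} (hA : A.PosSemidef) : ∃ L : Matrix n n ℝ, A = Lᵀ * L := by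
  obtain ⟨L, rfl⟩ := CStarAlgebra.nonneg_iff_eq_star_mul_self.mp hA.nonneg
  exact ⟨L, by rw [star_eq_conjTranspose, conjTranspose_eq_transpose_of_trivial]⟩

lemma dotProduct_transpose_mul_self_mulVec {m n : Type*} [Fintype m] [Fintype n]
    (L : Matrix m n ℝ) (z : n → ℝ) :
    z ⬝ᵥ (Lᵀ * L) *ᵥ z = ‖(EuclideanSpace.equiv m ℝ).symm (L *ᵥ z)‖ ^ 2 := by
  rw [EuclideanSpace.norm_sq_eq, ← mulVec_mulVec, dotProduct_transpose_mulVec]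
  simp [dotProduct, sq]

def gaussConst (n : ℕ) (S : Matrix (Fin n) (Fin n) ℝ) : ℝ :=
  (2 * π) ^ (-(n : ℝ) / 2) * S.det ^ (-(1 : ℝ) / 2)

section GaussianDensity

variable {n : ℕ}

lemma gaussD_eq_gaussConst_mul (x μ : Fin n → ℝ) (S : Matrix (Fin n) (Fin n) ℝ) :
    gaussD n x μ S = gaussConst n S * exp (-((x - μ) ⬝ᵥ (S⁻¹ *ᵥ (x - μ))) / 2) := rfl

lemma gaussConst_pos {S : Matrix (Fin n) (Fin n) ℝ} (hS : S.PosDef) : 0 < gaussConst n S :=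
  mul_pos (rpow_pos_of_pos (by positivity) _) (rpow_pos_of_pos hS.det_pos _)

lemma gaussD_pos {S : Matrix (Fin n) (Fin n) ℝ} (hS : S.PosDef) (x μ : Fin n → ℝ) :
    0 < gaussD n x μ S :=
  mul_pos (gaussConst_pos hS) (exp_pos _)

lemma Matrix.PosDef.exists_gaussD_eq_exp_neg_norm_sq {S : Matrix (Fin n) (Fin n) ℝ}
    (hS : S.PosDef) :
    ∃ T : (Fin n → ℝ) →L[ℝ] EuclideanSpace ℝ (Fin n),
      ∀ x μ, gaussD n x μ S = gaussConst n S * exp (-‖T (x - μ)‖ ^ 2 / 2) := by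
  obtain ⟨L, hL⟩ := hS.inv.posSemidef.exists_eq_transpose_mul_self
  refine ⟨(EuclideanSpace.equiv (Fin n) ℝ).symm.toContinuousLinearMap.comp
    (LinearMap.toContinuousLinearMap L.mulVecLin), fun x μ => ?_⟩
  rw [gaussD_eq_gaussConst_mul, hL, dotProduct_transpose_mul_self_mulVec]
  rfl

variable {α : Type*} [MeasurableSpace α] {μ : Measure α} {S : Matrix (Fin n) (Fin n) ℝ}
  {m : α → Fin n → ℝ} {g : α → ℝ}

theorem integrable_gaussD_mul (hS : S.PosDef) (hm : AEStronglyMeasurable m μ)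
    (hg : Integrable g μ) (y : Fin n → ℝ) :
    Integrable (fun a => gaussD n y (m a) S * g a) μ := by
  obtain ⟨T, hT⟩ := hS.exists_gaussD_eq_exp_neg_norm_sq
  simp_rw [hT, mul_assoc]
  exact (integrable_exp_neg_norm_sq_mul T hm hg y).const_mul _

theorem differentiable_integral_gaussD_mul (hS : S.PosDef) (hm : AEStronglyMeasurable m μ)
    (hg : Integrable g μ) : Differentiable ℝ (fun y => ∫ a, gaussD n y (m a) S * g a ∂μ) := by
  obtain ⟨T, hT⟩ := hS.exists_gaussD_eq_exp_neg_norm_sq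
  simp_rw [hT, mul_assoc, integral_const_mul]
  exact (differentiable_integral_exp_neg_norm_sq_mul T hm hg).const_mul _

theorem gaussD_mulVec_factor {d k : ℕ} {S : Matrix (Fin d) (Fin d) ℝ} (hS : Sᵀ = S)
    {B : Matrix (Fin d) (Fin k) ℝ} (hG : IsUnit (Bᵀ * S⁻¹ * B).det) (r : Fin d → ℝ)
    (μ : Fin k → ℝ) :
    gaussConst k (Bᵀ * S⁻¹ * B)⁻¹ * gaussD d r (B *ᵥ μ) S =
      gaussConst d S * exp (-(r ⬝ᵥ (S⁻¹ - S⁻¹ * B * (Bᵀ * S⁻¹ * B)⁻¹ * Bᵀ * S⁻¹) *ᵥ r) / 2) *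
        gaussD k (((Bᵀ * S⁻¹ * B)⁻¹ * Bᵀ * S⁻¹) *ᵥ r) μ (Bᵀ * S⁻¹ * B)⁻¹ := by
  rw [gaussD_eq_gaussConst_mul, gaussD_eq_gaussConst_mul, nonsing_inv_nonsing_inv _ hG,
    dotProduct_mulVec_complete_square (by rw [transpose_nonsing_inv, hS]) hG, neg_add,
    add_div, exp_add]
  ring

end GaussianDensity

section Gradient

variable {m n : ℕ}

lemma fderiv_apply_eq_gradv_dotProduct (f : (Fin n → ℝ) → ℝ) (x v : Fin n → ℝ) :
    fderiv ℝ f x v = gradv f x ⬝ᵥ v := by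
  have hv : v = ∑ j, v j • Pi.single j (1 : ℝ) := by ext; simp [Pi.single_apply]
  conv_lhs => rw [hv]
  simp [gradv, dotProduct, mul_comm]

lemma gradv_add {f g : (Fin n → ℝ) → ℝ} {x : Fin n → ℝ} (hf : DifferentiableAt ℝ f x)
    (hg : DifferentiableAt ℝ g x) : gradv (fun y => f y + g y) x = gradv f x + gradv g x := by
  ext i
  simp [gradv, fderiv_fun_add hf hg]

lemma gradv_const_add (c : ℝ) (f : (Fin n → ℝ) → ℝ) (x : Fin n → ℝ) :
    gradv (fun y => c + f y) x = gradv f x := by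
  ext i
  simp [gradv]

lemma gradv_comp_mulVec {f : (Fin m → ℝ) → ℝ} (A : Matrix (Fin m) (Fin n) ℝ) {x : Fin n → ℝ}
    (hf : DifferentiableAt ℝ f (A *ᵥ x)) :
    gradv (fun y => f (A *ᵥ y)) x = Aᵀ *ᵥ gradv f (A *ᵥ x) := by
  ext i
  have h : HasFDerivAt (fun y => f (A *ᵥ y))
      ((fderiv ℝ f (A *ᵥ x)).comp (LinearMap.toContinuousLinearMap A.mulVecLin)) x :=
    hf.hasFDerivAt.comp x (LinearMap.toContinuousLinearMap A.mulVecLin).hasFDerivAt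
  rw [gradv, h.fderiv, ContinuousLinearMap.comp_apply, fderiv_apply_eq_gradv_dotProduct]
  simp [mulVec, dotProduct, Pi.single_apply, mul_comm]

lemma hasFDerivAt_dotProduct_mulVec_self (M : Matrix (Fin n) (Fin n) ℝ) (x : Fin n → ℝ) :
    HasFDerivAt (fun y => y ⬝ᵥ M *ᵥ y)
      (LinearMap.toContinuousLinearMap (dotProductBilin ℝ ℝ ((M + Mᵀ) *ᵥ x))) x := by
  have hM := (LinearMap.toContinuousLinearMap M.mulVecLin).hasFDerivAt (x := x)
  refine ((dotProductBilin ℝ ℝ).toContinuousBilinearMap.hasFDerivAt_of_bilinear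
    (hasFDerivAt_id x) hM).congr_fderiv ?_
  ext v
  simp [add_mulVec, dotProduct_comm, dotProduct_transpose_mulVec]
  ring

lemma gradv_neg_dotProduct_mulVec_self_div_two {M : Matrix (Fin n) (Fin n) ℝ} (hM : Mᵀ = M)
    (x : Fin n → ℝ) : gradv (fun y => -(y ⬝ᵥ M *ᵥ y) / 2) x = -(M *ᵥ x) := by
  have h := (hasFDerivAt_dotProduct_mulVec_self M x).const_mul (-(1 / 2 : ℝ))
  rw [show (fun y => -(1 / 2 : ℝ) * (y ⬝ᵥ M *ᵥ y)) = fun y => -(y ⬝ᵥ M *ᵥ y) / 2 from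
    funext fun y => by ring] at h
  ext i
  rw [gradv, h.fderiv]
  simp [hM, dotProduct_single, add_mulVec]
  ring

end Gradient

lemma integral_mul_pos_of_pos {α : Type*} [MeasurableSpace α] {μ : Measure α} {K g : α → ℝ}
    (hK : ∀ a, 0 < K a) (hg : 0 ≤ g) (hKg : Integrable (fun a => K a * g a) μ)
    (hg_pos : 0 < ∫ a, g a ∂μ) : 0 < ∫ a, K a * g a ∂μ := by
  have hsupp : Function.support (fun a => K a * g a) = Function.support g := by
    ext a
    simp [(hK a).ne']
  rw [integral_pos_iff_support_of_nonneg (fun a => mul_nonneg (hK a).le (hg a)) hKg, hsupp,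
    ← integral_pos_iff_support_of_nonneg hg (Integrable.of_integral_ne_zero hg_pos.ne')]
  exact hg_pos

section FactorModel

variable {d k : ℕ} {β : Matrix (Fin d) (Fin k) ℝ} {σ : Fin d → ℝ} {t : ℝ}
  {pfac : (Fin k → ℝ) → ℝ}

lemma Lam_diag_pos (hσ : ∀ i, 0 < σ i) (ht : 0 ≤ t) (i : Fin d) :
    0 < hf t + σ i ^ 2 * af t ^ 2 := by
  have ha : 0 < af t := exp_pos _
  have ha1 : af t ≤ 1 := exp_le_one_iff.2 (by linarith)
  have := hσ i
  unfold hf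
  nlinarith [mul_pos (pow_pos this 2) (pow_pos ha 2)]

lemma Lam_transpose : (Lam σ t)ᵀ = Lam σ t := diagonal_transpose _

lemma Lam_inv_transpose : ((Lam σ t)⁻¹)ᵀ = (Lam σ t)⁻¹ := by
  rw [transpose_nonsing_inv, Lam_transpose]

lemma Lam_posDef (hσ : ∀ i, 0 < σ i) (ht : 0 ≤ t) : (Lam σ t).PosDef :=
  PosDef.diagonal (Lam_diag_pos hσ ht)

lemma LamInvSqrt_mul_self (hσ : ∀ i, 0 < σ i) (ht : 0 ≤ t) :
    LamInvSqrt σ t * LamInvSqrt σ t = (Lam σ t)⁻¹ := by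
  symm
  refine inv_eq_right_inv ?_
  rw [LamInvSqrt, Lam, diagonal_mul_diagonal, diagonal_mul_diagonal, ← diagonal_one]
  congr 1
  ext i
  have h := Lam_diag_pos hσ ht i
  rw [← mul_inv, mul_self_sqrt h.le, mul_inv_cancel₀ h.ne']

lemma gram_posDef (hβ : βᵀ * β = 1) (hσ : ∀ i, 0 < σ i) (ht : 0 ≤ t) :
    (βᵀ * (Lam σ t)⁻¹ * β).PosDef := by
  have hinj : Function.Injective β.mulVec := fun x y h => by
    simpa [mulVec_mulVec, hβ] using congrArg (βᵀ *ᵥ ·) h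
  simpa [conjTranspose_eq_transpose_of_trivial] using
    (Lam_posDef hσ ht).inv.conjTranspose_mul_mul_same hinj

lemma Gam_posDef (hβ : βᵀ * β = 1) (hσ : ∀ i, 0 < σ i) (ht : 0 ≤ t) : (Gam β σ t).PosDef :=
  (gram_posDef hβ hσ ht).inv

lemma Gam_transpose (hβ : βᵀ * β = 1) (hσ : ∀ i, 0 < σ i) (ht : 0 ≤ t) :
    (Gam β σ t)ᵀ = Gam β σ t := by
  simpa [IsHermitian, conjTranspose_eq_transpose_of_trivial] using
    (Gam_posDef hβ hσ ht).isHermitian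

lemma LamInvSqrt_mul_one_sub_Tproj_mul_LamInvSqrt (hσ : ∀ i, 0 < σ i) (ht : 0 ≤ t) :
    LamInvSqrt σ t * (1 - Tproj β σ t) * LamInvSqrt σ t =
      (Lam σ t)⁻¹ - (Lam σ t)⁻¹ * β * Gam β σ t * βᵀ * (Lam σ t)⁻¹ := by
  simp only [Tproj, Matrix.mul_sub, Matrix.sub_mul, Matrix.mul_one, ← Matrix.mul_assoc,
    LamInvSqrt_mul_self hσ ht]
  simp only [Matrix.mul_assoc, LamInvSqrt_mul_self hσ ht]

theorem gaussConst_mul_pT (hβ : βᵀ * β = 1) (hσ : ∀ i, 0 < σ i) (ht : 0 ≤ t) (r : Fin d → ℝ) :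
    gaussConst k (Gam β σ t) * pT β σ pfac t r =
      gaussConst d (Lam σ t) *
        exp (-(r ⬝ᵥ ((Lam σ t)⁻¹ - (Lam σ t)⁻¹ * β * Gam β σ t * βᵀ * (Lam σ t)⁻¹) *ᵥ r) / 2) *
          pTfac β σ pfac t ((Gam β σ t * βᵀ * (Lam σ t)⁻¹) *ᵥ r) := by
  rw [pT, pTfac, ← integral_const_mul, ← integral_const_mul]
  congr 1
  ext f
  rw [← mulVec_smul, ← mul_assoc, ← mul_assoc, Gam,
    gaussD_mulVec_factor Lam_transpose (gram_posDef hβ hσ ht).det_pos.ne'.isUnit r]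

lemma pTfac_pos (hβ : βᵀ * β = 1) (hσ : ∀ i, 0 < σ i) (ht : 0 ≤ t)
    (hpfac_nonneg : ∀ f, 0 ≤ pfac f) (hpfac_prob : ∫ f, pfac f = 1) (y : Fin k → ℝ) :
    0 < pTfac β σ pfac t y :=
  integral_mul_pos_of_pos (fun f => gaussD_pos (Gam_posDef hβ hσ ht) _ _) hpfac_nonneg
    (integrable_gaussD_mul (Gam_posDef hβ hσ ht) (continuous_const_smul (af t)).aestronglyMeasurable
      (Integrable.of_integral_ne_zero (by simp [hpfac_prob])) y)
    (by simp [hpfac_prob])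

lemma differentiable_pTfac (hβ : βᵀ * β = 1) (hσ : ∀ i, 0 < σ i) (ht : 0 ≤ t)
    (hpfac : Integrable pfac) : Differentiable ℝ (pTfac β σ pfac t) :=
  differentiable_integral_gaussD_mul (Gam_posDef hβ hσ ht)
    (continuous_const_smul (af t)).aestronglyMeasurable hpfac

lemma log_pT_eq (hβ : βᵀ * β = 1) (hσ : ∀ i, 0 < σ i) (ht : 0 ≤ t)
    (hpfac_nonneg : ∀ f, 0 ≤ pfac f) (hpfac_prob : ∫ f, pfac f = 1) (r : Fin d → ℝ) :
    log (pT β σ pfac t r) =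
      log (gaussConst d (Lam σ t) / gaussConst k (Gam β σ t)) +
        (-(r ⬝ᵥ ((Lam σ t)⁻¹ - (Lam σ t)⁻¹ * β * Gam β σ t * βᵀ * (Lam σ t)⁻¹) *ᵥ r) / 2 +
          log (pTfac β σ pfac t ((Gam β σ t * βᵀ * (Lam σ t)⁻¹) *ᵥ r))) := by
  have hΓ := gaussConst_pos (Gam_posDef hβ hσ ht)
  have hΛ := gaussConst_pos (Lam_posDef hσ ht)
  have hp := pTfac_pos hβ hσ ht hpfac_nonneg hpfac_prob ((Gam β σ t * βᵀ * (Lam σ t)⁻¹) *ᵥ r)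
  have h : pT β σ pfac t r = gaussConst d (Lam σ t) / gaussConst k (Gam β σ t) *
      exp (-(r ⬝ᵥ ((Lam σ t)⁻¹ - (Lam σ t)⁻¹ * β * Gam β σ t * βᵀ * (Lam σ t)⁻¹) *ᵥ r) / 2) *
        pTfac β σ pfac t ((Gam β σ t * βᵀ * (Lam σ t)⁻¹) *ᵥ r) := by
    rw [div_mul_eq_mul_div, div_mul_eq_mul_div, eq_div_iff hΓ.ne', mul_comm,
      gaussConst_mul_pT hβ hσ ht]
  rw [h, log_mul (by positivity) hp.ne', log_mul (by positivity) (exp_pos _).ne', log_exp,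
    add_assoc]

end FactorModel

theorem score_decomposition_general
    (d k : ℕ)
    (β : Matrix (Fin d) (Fin k) ℝ) (hβ : βᵀ * β = 1)
    (pfac : (Fin k → ℝ) → ℝ)
    (hpfac_nonneg : ∀ f, 0 ≤ pfac f)
    (hpfac_prob : (∫ f : Fin k → ℝ, pfac f) = 1)
    (σ : Fin d → ℝ)
    (hσpos : ∀ i, 0 < σ i)
    (t : ℝ) (htnn : 0 ≤ t) (r : Fin d → ℝ) :
    gradv (fun r' => Real.log (pT β σ pfac t r')) r =
      ((Lam σ t)⁻¹ * β * Gam β σ t) *ᵥ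
          gradv (fun y => Real.log (pTfac β σ pfac t y))
            ((Gam β σ t * βᵀ * (Lam σ t)⁻¹) *ᵥ r)
        - (LamInvSqrt σ t * (1 - Tproj β σ t) * LamInvSqrt σ t) *ᵥ r := by
  rw [funext (log_pT_eq hβ hσpos htnn hpfac_nonneg hpfac_prob), gradv_const_add]
  set A := Gam β σ t * βᵀ * (Lam σ t)⁻¹
  set M := (Lam σ t)⁻¹ - (Lam σ t)⁻¹ * β * Gam β σ t * βᵀ * (Lam σ t)⁻¹
  have hΓ := Gam_transpose hβ hσpos htnn
  have hA : Aᵀ = (Lam σ t)⁻¹ * β * Gam β σ t := by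
    simp only [A, transpose_mul, transpose_transpose, Lam_inv_transpose, hΓ, Matrix.mul_assoc]
  have hM : Mᵀ = M := by
    simp only [M, transpose_sub, transpose_mul, transpose_transpose, Lam_inv_transpose, hΓ,
      Matrix.mul_assoc]
  have hpfac : Integrable pfac := .of_integral_ne_zero (by simp [hpfac_prob])
  have hlog : DifferentiableAt ℝ (fun y => log (pTfac β σ pfac t y)) (A *ᵥ r) :=
    (differentiable_pTfac hβ hσpos htnn hpfac _).log
      (pTfac_pos hβ hσpos htnn hpfac_nonneg hpfac_prob _).ne'
  have hcomp : DifferentiableAt ℝ (fun y => log (pTfac β σ pfac t (A *ᵥ y))) r :=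
    hlog.comp r (LinearMap.toContinuousLinearMap A.mulVecLin).differentiableAt
  have hquad : DifferentiableAt ℝ (fun y => -(y ⬝ᵥ M *ᵥ y) / 2) r := by
    simpa only [div_eq_mul_inv, Pi.neg_apply] using
      (hasFDerivAt_dotProduct_mulVec_self M r).differentiableAt.neg.mul_const (2⁻¹ : ℝ)
  rw [gradv_add hquad hcomp,
    gradv_neg_dotProduct_mulVec_self_div_two hM, gradv_comp_mulVec A hlog, hA,
    LamInvSqrt_mul_one_sub_Tproj_mul_LamInvSqrt hσpos htnn, neg_add_eq_sub]

/-- score decomposition under the diffusion factor model. -/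
theorem score_decomposition
    (d k : ℕ) (hk1 : 1 ≤ k) (hkd : k ≤ d)
    (β : Matrix (Fin d) (Fin k) ℝ) (hβ : βᵀ * β = 1)
    (pfac : (Fin k → ℝ) → ℝ)
    (hpfac_nonneg : ∀ f, 0 ≤ pfac f)
    (hpfac_prob : (∫ f : Fin k → ℝ, pfac f) = 1)
    (hpfac_smooth : ContDiff ℝ 2 pfac)
    (hpfac_mom : Integrable (fun f : Fin k → ℝ => eucNorm f ^ 2 * pfac f))
    (σ : Fin d → ℝ) (σmax : ℝ)
    (hσpos : ∀ i, 0 < σ i)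
    (hσdec : ∀ i j : Fin d, i ≤ j → σ j ≤ σ i)
    (hσmax : ∀ i, σ i ≤ σmax)
    (t : ℝ) (htnn : 0 ≤ t) (r : Fin d → ℝ) :
    gradv (fun r' => Real.log (pT β σ pfac t r')) r =
      ((Lam σ t)⁻¹ * β * Gam β σ t) *ᵥ
          gradv (fun y => Real.log (pTfac β σ pfac t y))
            ((Gam β σ t * βᵀ * (Lam σ t)⁻¹) *ᵥ r)
        - (LamInvSqrt σ t * (1 - Tproj β σ t) * LamInvSqrt σ t) *ᵥ r :=
  score_decomposition_general d k β hβ pfac hpfac_nonneg hpfac_prob σ hσpos t htnn r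
end
end

section
/- Sub-Gaussian tail of the data density: assume the sub-Gaussian factor assumption. Then there exists a constant A > 0, depending only on C_1, C_2, B, k, d, σ_1, …, σ_d and sup over ‖f‖₂ ≤ B of p_fac(f), such that the data density satisfies p_data(r) ≤ A · exp(− ‖r‖₂² / (2(σ_max² + 1/C_2))) for every r ∈ ℝ^d. -/
open MeasureTheory Matrix

noncomputable section

/-- The data density `p_data`. -/
def pData {d k : ℕ} (β : Matrix (Fin d) (Fin k) ℝ) (σ : Fin d → ℝ)
    (pfac : (Fin k → ℝ) → ℝ) (r : Fin d → ℝ) : ℝ :=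
  ∫ f : Fin k → ℝ, gaussD d (r - β *ᵥ f) 0 (Matrix.diagonal fun i => σ i ^ 2) * pfac f

/-- completing-the-square inequality -/
lemma key_ineq' (a b R X F XF D : ℝ) (ha : 0 < a) (hb : 0 < b) (hXR : X ≤ R)
    (hD : D = F - 2*(b/(a+b))*XF + (b/(a+b))^2 * X) :
    -(R - 2*XF + F)/(2*a) - F/(2*b) ≤ -R/(2*(a+b)) - ((a+b)/(2*a*b)) * D := by
  have hab : 0 < a + b := by linarith
  have h : -R/(2*(a+b)) - ((a+b)/(2*a*b)) * D - (-(R - 2*XF + F)/(2*a) - F/(2*b))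
      = (b/(2*a*(a+b))) * (R - X) := by
    rw [hD]; field_simp; ring
  have h2 : 0 ≤ (b/(2*a*(a+b))) * (R - X) := by
    apply mul_nonneg (by positivity); linarith
  linarith

lemma dot_self_bf {d k : ℕ} (β : Matrix (Fin d) (Fin k) ℝ) (hβ : βᵀ * β = 1)
    (f : Fin k → ℝ) : (β *ᵥ f) ⬝ᵥ (β *ᵥ f) = f ⬝ᵥ f := by
  rw [dotProduct_mulVec, ← Matrix.transpose_transpose β, vecMul_transpose,
    Matrix.transpose_transpose, mulVec_mulVec, hβ, one_mulVec]

lemma dot_r_bf {d k : ℕ} (β : Matrix (Fin d) (Fin k) ℝ)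
    (r : Fin d → ℝ) (f : Fin k → ℝ) : r ⬝ᵥ (β *ᵥ f) = (βᵀ *ᵥ r) ⬝ᵥ f := by
  rw [dotProduct_mulVec, ← vecMul_transpose, Matrix.transpose_transpose]

lemma sum_sq_sub_expand {k : ℕ} (u v : Fin k → ℝ) :
    ∑ j, (u j - v j) ^ 2 = (∑ j, u j ^ 2) - 2 * (u ⬝ᵥ v) + ∑ j, v j ^ 2 := by
  simp only [dotProduct, Finset.mul_sum, ← Finset.sum_add_distrib, ← Finset.sum_sub_distrib]
  exact Finset.sum_congr rfl fun j _ => by ring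

set_option maxHeartbeats 2000000 in
/-- sub-Gaussian tail of the data density. -/
theorem data_density_subgaussian_tail
    (d k : ℕ) (hk1 : 1 ≤ k) (hkd : k ≤ d)
    (β : Matrix (Fin d) (Fin k) ℝ) (hβ : βᵀ * β = 1)
    (pfac : (Fin k → ℝ) → ℝ)
    (hpfac_nonneg : ∀ f, 0 ≤ pfac f)
    (hpfac_prob : (∫ f : Fin k → ℝ, pfac f) = 1)
    (hpfac_smooth : ContDiff ℝ 2 pfac)
    (hpfac_mom : Integrable (fun f : Fin k → ℝ => eucNorm f ^ 2 * pfac f))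
    (σ : Fin d → ℝ) (σmax : ℝ)
    (hσpos : ∀ i, 0 < σ i)
    (hσdec : ∀ i j : Fin d, i ≤ j → σ j ≤ σ i)
    (hσmax : ∀ i, σ i ≤ σmax)
    (B C₁ C₂ : ℝ) (hB : 0 < B) (hC₁ : 0 < C₁) (hC₂ : 0 < C₂)
    (htail : ∀ f : Fin k → ℝ, B ≤ eucNorm f →
      pfac f ≤ (2 * Real.pi) ^ (-(k : ℝ) / 2) * C₁ * Real.exp (-C₂ * eucNorm f ^ 2 / 2)) :
    ∃ A : ℝ, 0 < A ∧
      ∀ r : Fin d → ℝ,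
        pData β σ pfac r ≤ A * Real.exp (-(eucNorm r ^ 2) / (2 * (σmax ^ 2 + 1 / C₂))) := by
  classical
  have hd1 : 0 < d := lt_of_lt_of_le hk1 hkd
  have hσmaxpos : 0 < σmax := lt_of_lt_of_le (hσpos ⟨0, hd1⟩) (hσmax ⟨0, hd1⟩)
  set a : ℝ := σmax ^ 2 with ha_def
  have ha : 0 < a := by positivity
  set b : ℝ := 1 / C₂ with hb_def
  have hb : 0 < b := by positivity
  have hab : 0 < a + b := by linarith
  set c : ℝ := (a + b) / (2 * a * b) with hc_def
  have hc : 0 < c := by positivity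
  -- pfac bounded on the ball
  obtain ⟨M, hM0, hM⟩ : ∃ M, 0 ≤ M ∧ ∀ f : Fin k → ℝ, eucNorm f ≤ B → pfac f ≤ M := by
    obtain ⟨z, hz, hzmax⟩ := (isCompact_closedBall (0 : Fin k → ℝ) B).exists_isMaxOn
      (Metric.nonempty_closedBall.2 hB.le) hpfac_smooth.continuous.continuousOn
    refine ⟨pfac z, hpfac_nonneg z, fun f hf => hzmax ?_⟩
    rw [Metric.mem_closedBall, dist_zero_right]
    refine (pi_norm_le_iff_of_nonneg hB.le).2 fun i => ?_
    have h1 : f i ^ 2 ≤ ∑ j, f j ^ 2 :=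
      Finset.single_le_sum (fun j _ => sq_nonneg (f j)) (Finset.mem_univ i)
    have h2 := Real.sqrt_le_sqrt h1
    rw [Real.sqrt_sq_eq_abs] at h2
    exact le_trans h2 hf
  -- global sub-Gaussian bound on pfac
  set C₃ : ℝ := max ((2 * Real.pi) ^ (-(k : ℝ) / 2) * C₁) (M * Real.exp (C₂ * B ^ 2 / 2))
    with hC₃_def
  have hC₃ : 0 < C₃ := lt_of_lt_of_le
    (mul_pos (Real.rpow_pos_of_pos (by positivity) _) hC₁) (le_max_left _ _)
  have hexp_eq : ∀ S : ℝ, -C₂ * S / 2 = -S / (2 * b) := by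
    intro S
    have h2b : 2 * b = 2 / C₂ := by rw [hb_def]; ring
    rw [h2b, div_div_eq_mul_div]; ring
  have hpfb : ∀ f : Fin k → ℝ, pfac f ≤ C₃ * Real.exp (-(∑ j, f j ^ 2) / (2 * b)) := by
    intro f
    have hfq : eucNorm f ^ 2 = ∑ j, f j ^ 2 := Real.sq_sqrt (by positivity)
    rcases le_total B (eucNorm f) with h | h
    · calc pfac f ≤ (2 * Real.pi) ^ (-(k : ℝ) / 2) * C₁ * Real.exp (-C₂ * eucNorm f ^ 2 / 2) :=
            htail f h
        _ ≤ C₃ * Real.exp (-(∑ j, f j ^ 2) / (2 * b)) := by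
            rw [← hfq, ← hexp_eq]
            exact mul_le_mul_of_nonneg_right (le_max_left _ _) (Real.exp_pos _).le
    · have h2 : ∑ j, f j ^ 2 ≤ B ^ 2 := by
        rw [← hfq]; exact pow_le_pow_left₀ (Real.sqrt_nonneg _) h 2
      have h3 : Real.exp (-C₂ * B ^ 2 / 2) ≤ Real.exp (-(∑ j, f j ^ 2) / (2 * b)) := by
        rw [← hexp_eq]; apply Real.exp_le_exp.2; nlinarith
      calc pfac f ≤ M := hM f h
        _ = M * Real.exp (C₂ * B ^ 2 / 2) * Real.exp (-C₂ * B ^ 2 / 2) := by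
            rw [mul_assoc, ← Real.exp_add]
            have : C₂ * B ^ 2 / 2 + -C₂ * B ^ 2 / 2 = 0 := by ring
            rw [this, Real.exp_zero, mul_one]
        _ ≤ M * Real.exp (C₂ * B ^ 2 / 2) * Real.exp (-(∑ j, f j ^ 2) / (2 * b)) :=
            mul_le_mul_of_nonneg_left h3 (by positivity)
        _ ≤ C₃ * Real.exp (-(∑ j, f j ^ 2) / (2 * b)) :=
            mul_le_mul_of_nonneg_right (le_max_right _ _) (Real.exp_pos _).le
  -- Gaussian kernel bound
  set Kd : ℝ := (∏ i, σ i ^ 2) ^ (-(1 : ℝ) / 2) with hKd_def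
  have hKdpos : 0 < Kd := Real.rpow_pos_of_pos (Finset.prod_pos fun i _ => pow_pos (hσpos i) 2) _
  set Kg : ℝ := (2 * Real.pi) ^ (-(d : ℝ) / 2) * Kd with hKg_def
  have hKgpos : 0 < Kg := mul_pos (Real.rpow_pos_of_pos (by positivity) _) hKdpos
  have hSinv : (Matrix.diagonal fun i => σ i ^ 2 : Matrix (Fin d) (Fin d) ℝ)⁻¹
      = Matrix.diagonal (fun i => (σ i ^ 2)⁻¹) := by
    apply Matrix.inv_eq_right_inv
    rw [Matrix.diagonal_mul_diagonal]
    have h1 : (fun i => σ i ^ 2 * (σ i ^ 2)⁻¹) = fun _ : Fin d => (1 : ℝ) :=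
      funext fun i => mul_inv_cancel₀ (pow_pos (hσpos i) 2).ne'
    rw [h1, Matrix.diagonal_one]
  have hgauss : ∀ v : Fin d → ℝ,
      gaussD d v 0 (Matrix.diagonal fun i => σ i ^ 2)
        ≤ Kg * Real.exp (-(∑ i, v i ^ 2) / (2 * a)) := by
    intro v
    rw [gaussD, hSinv, Matrix.det_diagonal, sub_zero, ← hKd_def]
    have hquad : (∑ i, v i ^ 2) / a ≤ v ⬝ᵥ (Matrix.diagonal (fun i => (σ i ^ 2)⁻¹) *ᵥ v) := by
      simp only [dotProduct, mulVec_diagonal, Finset.sum_div]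
      apply Finset.sum_le_sum
      intro i _
      have hσi : 0 < σ i ^ 2 := pow_pos (hσpos i) 2
      have hσa : σ i ^ 2 ≤ a := by
        rw [ha_def]; exact pow_le_pow_left₀ (hσpos i).le (hσmax i) 2
      have h1 : v i ^ 2 * a⁻¹ ≤ v i ^ 2 * (σ i ^ 2)⁻¹ :=
        mul_le_mul_of_nonneg_left (inv_anti₀ hσi hσa) (sq_nonneg _)
      calc v i ^ 2 / a = v i ^ 2 * a⁻¹ := div_eq_mul_inv _ _
        _ ≤ v i ^ 2 * (σ i ^ 2)⁻¹ := h1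
        _ = v i * ((σ i ^ 2)⁻¹ * v i) := by ring
    rw [hKg_def, mul_assoc, mul_assoc]
    apply mul_le_mul_of_nonneg_left _ (Real.rpow_pos_of_pos (by positivity) _).le
    apply mul_le_mul_of_nonneg_left _ hKdpos.le
    apply Real.exp_le_exp.2
    have heq : -(∑ i, v i ^ 2) / (2 * a) = -((∑ i, v i ^ 2) / a) / 2 := by ring
    rw [heq]
    linarith [hquad]
  -- the master integral
  set I₀ : ℝ := ∫ f : Fin k → ℝ, Real.exp (-(c * ∑ j, f j ^ 2)) with hI₀_def
  have hI₀ : 0 ≤ I₀ := integral_nonneg fun f => (Real.exp_pos _).le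
  refine ⟨Kg * C₃ * I₀ + 1, by positivity, fun r => ?_⟩
  set x : Fin k → ℝ := βᵀ *ᵥ r with hx_def
  set μv : Fin k → ℝ := (b / (a + b)) • x with hμv_def
  set R : ℝ := ∑ i, r i ^ 2 with hR_def
  -- linear algebra identities
  have qd : ∀ (n : ℕ) (u : Fin n → ℝ), u ⬝ᵥ u = ∑ i, u i ^ 2 := by
    intro n u; simp [dotProduct, sq]
  have E1 : ∀ f : Fin k → ℝ,
      ∑ i, (r - β *ᵥ f) i ^ 2 = R - 2 * (x ⬝ᵥ f) + ∑ j, f j ^ 2 := by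
    intro f
    have h0 : ∑ i, (r - β *ᵥ f) i ^ 2 = ∑ i, (r i - (β *ᵥ f) i) ^ 2 := rfl
    have hbf : ∑ j, (β *ᵥ f) j ^ 2 = ∑ j, f j ^ 2 := by
      rw [← qd _ (β *ᵥ f), dot_self_bf β hβ, qd]
    rw [h0, sum_sq_sub_expand, hbf, dot_r_bf β r f]
  have E2 : ∑ j, x j ^ 2 ≤ R := by
    have h0 : (0 : ℝ) ≤ ∑ i, (r - β *ᵥ x) i ^ 2 :=
      Finset.sum_nonneg fun i _ => sq_nonneg _
    rw [E1 x, ← qd] at h0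
    rw [← qd]
    nlinarith [h0]
  have E3 : ∀ f : Fin k → ℝ,
      ∑ j, (f - μv) j ^ 2
        = (∑ j, f j ^ 2) - 2 * (b / (a + b)) * (x ⬝ᵥ f) + (b / (a + b)) ^ 2 * ∑ j, x j ^ 2 := by
    intro f
    have h1 : ∑ j, (f - μv) j ^ 2 = ∑ j, (f j - (b / (a + b)) * x j) ^ 2 := rfl
    have h2 : f ⬝ᵥ (fun j => (b / (a + b)) * x j) = (b / (a + b)) * (x ⬝ᵥ f) := by
      simp only [dotProduct, Finset.mul_sum]
      exact Finset.sum_congr rfl fun j _ => by ring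
    have h3 : ∑ j, ((b / (a + b)) * x j) ^ 2 = (b / (a + b)) ^ 2 * ∑ j, x j ^ 2 := by
      rw [Finset.mul_sum]; exact Finset.sum_congr rfl fun j _ => by ring
    rw [h1, sum_sq_sub_expand, h2, h3]; ring
  -- nonnegativity of the Gaussian kernel
  have hgnn : ∀ v : Fin d → ℝ,
      0 ≤ gaussD d v 0 (Matrix.diagonal fun i => σ i ^ 2) := by
    intro v
    rw [gaussD, Matrix.det_diagonal]
    apply mul_nonneg (mul_nonneg _ _) (Real.exp_pos _).le
    · exact Real.rpow_nonneg (by positivity) _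
    · exact Real.rpow_nonneg (Finset.prod_nonneg fun i _ => sq_nonneg _) _
  -- pointwise domination
  set h : (Fin k → ℝ) → ℝ := fun f =>
    Kg * C₃ * Real.exp (-R / (2 * (a + b))) * Real.exp (-(c * ∑ j, (f - μv) j ^ 2)) with hh_def
  have hpoint : ∀ f : Fin k → ℝ,
      gaussD d (r - β *ᵥ f) 0 (Matrix.diagonal fun i => σ i ^ 2) * pfac f ≤ h f := by
    intro f
    calc gaussD d (r - β *ᵥ f) 0 (Matrix.diagonal fun i => σ i ^ 2) * pfac f
        ≤ (Kg * Real.exp (-(∑ i, (r - β *ᵥ f) i ^ 2) / (2 * a)))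
            * (C₃ * Real.exp (-(∑ j, f j ^ 2) / (2 * b))) :=
          mul_le_mul (hgauss _) (hpfb f) (hpfac_nonneg f) (by positivity)
      _ = Kg * C₃ * Real.exp (-(∑ i, (r - β *ᵥ f) i ^ 2) / (2 * a)
            + -(∑ j, f j ^ 2) / (2 * b)) := by
          rw [Real.exp_add]; ring
      _ ≤ Kg * C₃ * Real.exp (-R / (2 * (a + b)) + -(c * ∑ j, (f - μv) j ^ 2)) := by
          apply mul_le_mul_of_nonneg_left _ (by positivity)
          apply Real.exp_le_exp.2
          have hk := key_ineq' a b R (∑ j, x j ^ 2) (∑ j, f j ^ 2) (x ⬝ᵥ f)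
            (∑ j, (f - μv) j ^ 2) ha hb E2 (E3 f)
          rw [E1 f, hc_def]
          ring_nf
          ring_nf at hk
          linarith [hk]
      _ = h f := by rw [hh_def, Real.exp_add]; ring
  -- integrability of the dominating function
  have hInt : Integrable (fun f : Fin k → ℝ => Real.exp (-(c * ∑ j, (f - μv) j ^ 2))) := by
    have heq : (fun f : Fin k → ℝ => Real.exp (-(c * ∑ j, (f - μv) j ^ 2)))
        = fun f => ∏ j, Real.exp (-c * (f j - μv j) ^ 2) := by
      funext f
      rw [← Real.exp_sum]
      congr 1
      rw [Finset.mul_sum, ← Finset.sum_neg_distrib]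
      exact Finset.sum_congr rfl fun j _ => by rw [Pi.sub_apply]; ring
    rw [heq]
    exact Integrable.fintype_prod fun j =>
      (integrable_exp_neg_mul_sq hc).comp_sub_right (μv j)
  -- translation invariance
  have htrans : ∫ f : Fin k → ℝ, Real.exp (-(c * ∑ j, (f - μv) j ^ 2)) = I₀ := by
    rw [hI₀_def]
    exact integral_sub_right_eq_self
      (fun f : Fin k → ℝ => Real.exp (-(c * ∑ j, f j ^ 2))) μv
  -- compare the integrals
  have hmono : pData β σ pfac r ≤ ∫ f, h f := by
    rw [pData]
    apply integral_mono_of_nonneg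
    · exact Filter.Eventually.of_forall fun f => mul_nonneg (hgnn _) (hpfac_nonneg f)
    · exact hInt.const_mul _
    · exact Filter.Eventually.of_forall hpoint
  have hIntegralEq : ∫ f, h f = Kg * C₃ * Real.exp (-R / (2 * (a + b))) * I₀ := by
    rw [hh_def]
    rw [MeasureTheory.integral_const_mul, htrans]
  -- conclusion
  have heuc : eucNorm r ^ 2 = R := by
    rw [eucNorm, hR_def]
    exact Real.sq_sqrt (Finset.sum_nonneg fun i _ => sq_nonneg _)
  rw [heuc]
  calc pData β σ pfac r ≤ Kg * C₃ * Real.exp (-R / (2 * (a + b))) * I₀ := by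
        rw [← hIntegralEq]; exact hmono
    _ = (Kg * C₃ * I₀) * Real.exp (-R / (2 * (a + b))) := by ring
    _ ≤ (Kg * C₃ * I₀ + 1) * Real.exp (-R / (2 * (a + b))) :=
        mul_le_mul_of_nonneg_right (by linarith) (Real.exp_pos _).le
end
end

section
/- Integral bound: let c > 1, γ ≥ 0 and 0 ≤ t₀ < T. Then ∫_{t₀}^{T} (γ e^{-w/2} − 1) / (1 + (c − 1) e^{-w}) dw ≤ 2γ − (T − t₀) + log(1 + (c − 1) e^{-t₀}). -/
open MeasureTheory intervalIntegral

/-! Since `D(w) = 1 + (c - 1) e^{-w} ≥ 1`, the integrand is at most `γ e^{-w/2} - 1 / D(w)`.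
Both terms have explicit primitives, `-2γ e^{-w/2}` and `-w - log D(w)`; the resulting bound
`2γ (e^{-t₀/2} - e^{-T/2}) - (T - t₀) - log D(T) + log D(t₀)` gives the claim since `t₀ ≥ 0`
and `D(T) ≥ 1`. -/

namespace Real

lemma integral_exp_neg_div_two (a b : ℝ) :
    ∫ w in a..b, exp (-w / 2) = 2 * (exp (-a / 2) - exp (-b / 2)) := by
  have hderiv (w : ℝ) : HasDerivAt (fun w => -2 * exp (-w / 2)) (exp (-w / 2)) w :=
    (((hasDerivAt_neg w).div_const 2).exp.const_mul (-2)).congr_deriv (by ring)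
  rw [integral_eq_sub_of_hasDerivAt (fun w _ => hderiv w)
    ((by fun_prop : Continuous fun w => exp (-w / 2)).intervalIntegrable _ _)]
  ring

section OneAddMulExpNeg

variable {a : ℝ} (ha : 0 ≤ a)
include ha

lemma one_le_one_add_mul_exp_neg (w : ℝ) : 1 ≤ 1 + a * exp (-w) :=
  le_add_of_nonneg_right (by positivity)

lemma one_add_mul_exp_neg_ne_zero (w : ℝ) : 1 + a * exp (-w) ≠ 0 :=
  (zero_lt_one.trans_le (one_le_one_add_mul_exp_neg ha w)).ne'

lemma hasDerivAt_add_log_one_add_mul_exp_neg (w : ℝ) :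
    HasDerivAt (fun w => w + log (1 + a * exp (-w))) (1 + a * exp (-w))⁻¹ w :=
  ((hasDerivAt_id' w).add ((((hasDerivAt_neg w).exp.const_mul a).const_add 1).log
    (one_add_mul_exp_neg_ne_zero ha w))).congr_deriv (by field_simp; ring)

lemma continuous_inv_one_add_mul_exp_neg : Continuous fun w => (1 + a * exp (-w))⁻¹ :=
  (by fun_prop : Continuous fun w => 1 + a * exp (-w)).inv₀ (one_add_mul_exp_neg_ne_zero ha)

lemma integral_inv_one_add_mul_exp_neg (t₀ T : ℝ) :
    ∫ w in t₀..T, (1 + a * exp (-w))⁻¹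
      = T - t₀ + log (1 + a * exp (-T)) - log (1 + a * exp (-t₀)) := by
  rw [integral_eq_sub_of_hasDerivAt (fun w _ => hasDerivAt_add_log_one_add_mul_exp_neg ha w)
    ((continuous_inv_one_add_mul_exp_neg ha).intervalIntegrable _ _)]
  ring

end OneAddMulExpNeg

end Real

lemma sub_one_div_le_sub_inv {u d : ℝ} (hu : 0 ≤ u) (hd : 1 ≤ d) : (u - 1) / d ≤ u - d⁻¹ := by
  rw [sub_div, one_div]
  gcongr
  exact div_le_self hu hd

open Real in
/-- integral bound. -/
theorem integral_bound (c γ t₀ T : ℝ) (hc : 1 < c) (hγ : 0 ≤ γ)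
    (ht₀ : 0 ≤ t₀) (hT : t₀ < T) :
    (∫ w in t₀..T, (γ * Real.exp (-w / 2) - 1) / (1 + (c - 1) * Real.exp (-w)))
      ≤ 2 * γ - (T - t₀) + Real.log (1 + (c - 1) * Real.exp (-t₀)) := by
  have ha : 0 ≤ c - 1 := by linarith
  have hexp : Continuous fun w => γ * exp (-w / 2) := by fun_prop
  have hinv := continuous_inv_one_add_mul_exp_neg ha
  have hmono : (∫ w in t₀..T, (γ * exp (-w / 2) - 1) / (1 + (c - 1) * exp (-w)))
      ≤ ∫ w in t₀..T, (γ * exp (-w / 2) - (1 + (c - 1) * exp (-w))⁻¹) :=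
    integral_mono_on hT.le
      (((hexp.sub continuous_const).div (by fun_prop)
        (one_add_mul_exp_neg_ne_zero ha)).intervalIntegrable _ _)
      ((hexp.sub hinv).intervalIntegrable _ _)
      fun w _ => sub_one_div_le_sub_inv (by positivity) (one_le_one_add_mul_exp_neg ha w)
  rw [integral_sub (hexp.intervalIntegrable _ _) (hinv.intervalIntegrable _ _),
    intervalIntegral.integral_const_mul, integral_exp_neg_div_two,
    integral_inv_one_add_mul_exp_neg ha] at hmono
  have hexp_t₀ : exp (-t₀ / 2) ≤ 1 := exp_le_one_iff.mpr (by linarith)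
  have hlog_T : 0 ≤ log (1 + (c - 1) * exp (-T)) := log_nonneg (one_le_one_add_mul_exp_neg ha T)
  nlinarith [mul_nonneg hγ (exp_pos (-T / 2)).le]
end

section
/- Elementary logarithmic inequality: for every c ∈ (0, 1/2] and every t₀ ∈ (0, 1], (1/√(1 − c)) · log( (1 + e^{-t₀/2} √(1 − c)) / (1 − e^{-t₀/2} √(1 − c)) ) ≤ √2 · (log 4 − log(c + t₀)). -/
set_option maxHeartbeats 1000000 in
private lemma core_poly (c t : ℝ) (hc0 : 0 < c) (hc2 : c ≤ 1/2) (ht0 : 0 < t)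
    (ht1 : t ≤ 1) : (1-c)*(5-c+t)^2 ≤ ((5-3*c-t)*(1+t/2+t^2/8))^2 := by
  nlinarith [sq_nonneg (t*c), sq_nonneg t, sq_nonneg c, sq_nonneg (t-c),
    sq_nonneg (t+c), mul_pos hc0 ht0, sq_nonneg (t*t), sq_nonneg (1-t),
    sq_nonneg (1/2-c), mul_nonneg ht0.le (by linarith : (0:ℝ) ≤ 1 - t),
    mul_nonneg hc0.le (by linarith : (0:ℝ) ≤ 1/2 - c)]

set_option maxHeartbeats 1000000 in
/-- elementary logarithmic inequality. -/
theorem elementary_log_inequality (c t₀ : ℝ)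
    (hc : c ∈ Set.Ioc (0 : ℝ) (1 / 2)) (ht₀ : t₀ ∈ Set.Ioc (0 : ℝ) 1) :
    (1 / Real.sqrt (1 - c)) *
        Real.log ((1 + Real.exp (-t₀ / 2) * Real.sqrt (1 - c))
          / (1 - Real.exp (-t₀ / 2) * Real.sqrt (1 - c)))
      ≤ Real.sqrt 2 * (Real.log 4 - Real.log (c + t₀)) := by
  obtain ⟨hc0, hc2⟩ := hc
  obtain ⟨ht0, ht1⟩ := ht₀
  have hc1 : (0:ℝ) < 1 - c := by linarith
  obtain ⟨k, hk⟩ : ∃ x, Real.sqrt (1 - c) = x := ⟨_, rfl⟩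
  obtain ⟨r, hr⟩ : ∃ x, Real.exp (-t₀ / 2) = x := ⟨_, rfl⟩
  rw [hk, hr]
  have hk0 : 0 < k := hk ▸ Real.sqrt_pos.mpr hc1
  have hk2 : k ^ 2 = 1 - c := hk ▸ Real.sq_sqrt hc1.le
  have hk1 : k < 1 := by nlinarith
  have hr0 : 0 < r := hr ▸ Real.exp_pos _
  have hr1 : r < 1 := hr ▸ Real.exp_lt_one_iff.mpr (by linarith)
  have hq : 1 + t₀/2 + t₀^2/8 ≤ Real.exp (t₀/2) := by
    have := Real.quadratic_le_exp_of_nonneg (x := t₀/2) (by linarith)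
    nlinarith [this]
  have hrq : r * (1 + t₀/2 + t₀^2/8) ≤ 1 := by
    have hz : -t₀ / 2 + t₀ / 2 = 0 := by ring
    have h1 : r * Real.exp (t₀/2) = 1 := by
      rw [← hr, ← Real.exp_add, hz, Real.exp_zero]
    nlinarith [hq, hr0]
  have hcore := core_poly c t₀ hc0 hc2 ht0 ht1
  have hB0 : (0:ℝ) ≤ (5-3*c-t₀)*(1+t₀/2+t₀^2/8) := by nlinarith
  have hA0 : (0:ℝ) ≤ k * (5-c+t₀) := mul_nonneg hk0.le (by linarith)
  have hkb : k * (5-c+t₀) ≤ (5-3*c-t₀)*(1+t₀/2+t₀^2/8) := by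
    have hsq : (k * (5-c+t₀))^2 ≤ ((5-3*c-t₀)*(1+t₀/2+t₀^2/8))^2 := by
      have h : (k * (5-c+t₀))^2 = (1-c)*(5-c+t₀)^2 := by rw [mul_pow, hk2]
      rw [h]; exact hcore
    exact (pow_le_pow_iff_left₀ hA0 hB0 two_ne_zero).mp hsq
  have hs0 : 0 < r * k := mul_pos hr0 hk0
  have hs1 : r * k < 1 := by nlinarith
  have hkey : r * k * (5 - c + t₀) ≤ 5 - 3*c - t₀ := by
    have h2 : r * (k * (5-c+t₀)) ≤ r * ((5-3*c-t₀)*(1+t₀/2+t₀^2/8)) :=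
      mul_le_mul_of_nonneg_left hkb hr0.le
    have h3 : r * ((5-3*c-t₀)*(1+t₀/2+t₀^2/8)) ≤ 5-3*c-t₀ := by
      nlinarith [hrq, hr0]
    nlinarith [h2, h3]
  have hu0 : 0 < c + t₀ := by linarith
  have hratio : (1 + r * k)/(1 - r * k) ≤ (5 - 2*c)/(c + t₀) := by
    rw [div_le_div_iff₀ (by linarith) hu0]
    nlinarith [hkey]
  have hlog1 : Real.log ((1 + r * k)/(1 - r * k))
      ≤ Real.log (5-2*c) - Real.log (c+t₀) :=
    calc Real.log ((1 + r * k)/(1 - r * k))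
        ≤ Real.log ((5-2*c)/(c+t₀)) :=
          Real.log_le_log (div_pos (by linarith) (by linarith)) hratio
      _ = Real.log (5-2*c) - Real.log (c+t₀) :=
          Real.log_div (by linarith) (ne_of_gt hu0)
  have hlog2 : Real.log (5-2*c) ≤ Real.log 4 + (1-2*c)/4 := by
    have h1 : Real.log ((5-2*c)/4) ≤ (5-2*c)/4 - 1 :=
      Real.log_le_sub_one_of_pos (by linarith)
    rw [Real.log_div (by linarith) (by norm_num)] at h1
    linarith
  have hL58 : 5/8 ≤ Real.log 4 - Real.log (c + t₀) := by
    have h1 : Real.log ((c+t₀)/4) ≤ (c+t₀)/4 - 1 :=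
      Real.log_le_sub_one_of_pos (by positivity)
    rw [Real.log_div (ne_of_gt hu0) (by norm_num)] at h1
    linarith
  have hs2 : Real.sqrt 2 ^ 2 = 2 := Real.sq_sqrt (by norm_num)
  have hs2l : (1.4:ℝ) ≤ Real.sqrt 2 := by
    rw [show (1.4:ℝ) = Real.sqrt (1.96) by
      rw [show (1.96:ℝ) = 1.4^2 by norm_num, Real.sqrt_sq (by norm_num)]]
    exact Real.sqrt_le_sqrt (by norm_num)
  have hs2u : Real.sqrt 2 ≤ 1.5 := by
    rw [show (1.5:ℝ) = Real.sqrt (2.25) by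
      rw [show (2.25:ℝ) = 1.5^2 by norm_num, Real.sqrt_sq (by norm_num)]]
    exact Real.sqrt_le_sqrt (by norm_num)
  have hm : 1 + (Real.sqrt 2 - 1)*(1 - 2*c) ≤ Real.sqrt 2 * k := by
    have ha2 : (Real.sqrt 2 * k)^2 = 2*(1-c) := by rw [mul_pow, hs2, hk2]
    have hm0 : (0:ℝ) < 1 + (Real.sqrt 2 - 1)*(1 - 2*c) := by
      have := mul_nonneg (by linarith : (0:ℝ) ≤ Real.sqrt 2 - 1)
        (by linarith : (0:ℝ) ≤ 1 - 2*c)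
      linarith
    have ha0 : (0:ℝ) ≤ Real.sqrt 2 * k :=
      mul_nonneg (Real.sqrt_nonneg 2) hk0.le
    have hsq : (1 + (Real.sqrt 2 - 1)*(1 - 2*c))^2 ≤ (Real.sqrt 2 * k)^2 := by
      rw [ha2]
      have e1 : (1 + (Real.sqrt 2 - 1)*(1 - 2*c))^2
          = 1 + (1-2*c) - (3 - 2*Real.sqrt 2)*((1-2*c)*(2*c))
            + (Real.sqrt 2^2 - 2)*(1-2*c)^2 := by ring
      rw [e1, hs2]
      have h32 : (0:ℝ) ≤ 3 - 2*Real.sqrt 2 := by linarith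
      have hprod : (0:ℝ) ≤ (3 - 2*Real.sqrt 2)*((1-2*c)*(2*c)) :=
        mul_nonneg h32 (mul_nonneg (by linarith) (by linarith))
      linarith
    exact (pow_le_pow_iff_left₀ hm0.le ha0 two_ne_zero).mp hsq
  have hΛ : Real.log ((1 + r * k)/(1 - r * k))
      ≤ Real.sqrt 2 * k * (Real.log 4 - Real.log (c + t₀)) := by
    have step2 : (Real.log 4 - Real.log (c + t₀)) + (1-2*c)/4
        ≤ (1 + (Real.sqrt 2 - 1)*(1 - 2*c)) * (Real.log 4 - Real.log (c + t₀)) := by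
      have hw : (0:ℝ) ≤ 1 - 2*c := by linarith
      linarith [mul_le_mul_of_nonneg_left hL58
        (mul_nonneg (by linarith : (0:ℝ) ≤ Real.sqrt 2 - 1) hw),
        mul_nonneg hw (by linarith : (0:ℝ) ≤ Real.sqrt 2 - 1.4)]
    have step3 : (1 + (Real.sqrt 2 - 1)*(1 - 2*c)) * (Real.log 4 - Real.log (c + t₀))
        ≤ Real.sqrt 2 * k * (Real.log 4 - Real.log (c + t₀)) :=
      mul_le_mul_of_nonneg_right hm (by linarith)
    linarith
  rw [div_mul_eq_mul_div, div_le_iff₀ hk0]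
  linarith [hΛ]
end
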